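/- Subadditivity of entanglement of purification: for bipartite density matrices ρ on A₁ ⊗ B₁ and σ on A₂ ⊗ B₂, E_P(ρ ⊗ σ) ≤ E_P(ρ) + E_P(σ), where ρ ⊗ σ is viewed as a bipartite state across the cut A₁A₂ : B₁B₂. -/

import Mathlib

open Matrix BigOperators Kronecker
open scoped ComplexOrder

noncomputable section

/-- A density matrix: positive semidefinite with trace one. -/
def IsDensity {n : Type*} [Fintype n] [DecidableEq n] (ρ : Matrix n n ℂ) : Prop :=
  ρ.PosSemidef ∧ ρ.trace = 1

/-- von Neumann entropy (base 2), via the eigenvalues of a Hermitian matrix,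
with the convention `0 log 0 = 0` (since `Real.logb 2 0 = 0`). -/
noncomputable def vN {n : Type*} [Fintype n] [DecidableEq n] (ρ : Matrix n n ℂ) : ℝ :=
  if h : ρ.IsHermitian then -∑ i, h.eigenvalues i * Real.logb 2 (h.eigenvalues i) else 0

/-- The rank-one projector `|ψ⟩⟨ψ|` associated to a vector `ψ`. -/
def pureMat {n : Type*} (ψ : n → ℂ) : Matrix n n ℂ :=
  Matrix.of fun i j => ψ i * star (ψ j)

/-- Partial trace over the second (right) tensor factor. -/
def ptrR {A B : Type*} [Fintype B] (ρ : Matrix (A × B) (A × B) ℂ) : Matrix A A ℂ :=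
  Matrix.of fun a a' => ∑ b, ρ (a, b) (a', b)

/-- Partial trace over the first (left) tensor factor. -/
def ptrL {A B : Type*} [Fintype A] (ρ : Matrix (A × B) (A × B) ℂ) : Matrix B B ℂ :=
  Matrix.of fun b b' => ∑ a, ρ (a, b) (a, b')

/-- Reduced state on `A ⊗ B` of a pure vector on `(A ⊗ A') ⊗ (B ⊗ B')`. -/
def redAB {A B A' B' : Type*} [Fintype A'] [Fintype B']
    (ψ : (A × A') × (B × B') → ℂ) : Matrix (A × B) (A × B) ℂ :=
  Matrix.of fun p q => ∑ x, ∑ y, ψ ((p.1, x), (p.2, y)) * star (ψ ((q.1, x), (q.2, y)))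

/-- Reduced state on `A ⊗ A'` of a pure vector on `(A ⊗ A') ⊗ (B ⊗ B')`. -/
def redAAp {A B A' B' : Type*} [Fintype B] [Fintype B']
    (ψ : (A × A') × (B × B') → ℂ) : Matrix (A × A') (A × A') ℂ :=
  Matrix.of fun p q => ∑ b, ∑ y, ψ (p, (b, y)) * star (ψ (q, (b, y)))

/-- `ψ ∈ (A ⊗ A') ⊗ (B ⊗ B')` is a purification of the bipartite state `ρ` on `A ⊗ B`. -/
def IsPurification {A B A' B' : Type*} [Fintype A] [Fintype B] [Fintype A'] [Fintype B']
    (ρ : Matrix (A × B) (A × B) ℂ) (ψ : (A × A') × (B × B') → ℂ) : Prop :=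
  (∑ i, Complex.normSq (ψ i)) = 1 ∧ redAB ψ = ρ

/-- Entanglement of purification: the infimum of `S(AA')` over purifications of `ρ`,
where (w.l.o.g., by Terhal et al. / Ibinson et al.) the ancillas `A'`, `B'` have
dimension `|A||B|`. -/
noncomputable def EP {A B : Type*} [Fintype A] [Fintype B] [DecidableEq A] [DecidableEq B]
    (ρ : Matrix (A × B) (A × B) ℂ) : ℝ :=
  sInf { e | ∃ ψ : (A × Fin (Fintype.card A * Fintype.card B)) ×
      (B × Fin (Fintype.card A * Fintype.card B)) → ℂ,
      IsPurification ρ ψ ∧ e = vN (redAAp ψ) }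

/-- `n`-fold tensor power of a bipartite state, regrouped across the cut `Aⁿ : Bⁿ`. -/
def tpow {A B : Type*} (ρ : Matrix (A × B) (A × B) ℂ) (n : ℕ) :
    Matrix ((Fin n → A) × (Fin n → B)) ((Fin n → A) × (Fin n → B)) ℂ :=
  Matrix.of fun p q => ∏ i, ρ (p.1 i, p.2 i) (q.1 i, q.2 i)

/-- Regularized entanglement of purification. -/
noncomputable def EPinf {A B : Type*} [Fintype A] [Fintype B] [DecidableEq A] [DecidableEq B]
    (ρ : Matrix (A × B) (A × B) ℂ) : ℝ :=
  ⨅ n : ℕ+, EP (tpow ρ (n : ℕ)) / (n : ℕ)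

/-- Shannon entropy (base 2) of a finitely supported probability vector. -/
noncomputable def shannon {ι : Type*} [Fintype ι] (p : ι → ℝ) : ℝ :=
  -∑ i, p i * Real.logb 2 (p i)

/-- A generic purification of `ρ` on `H` with purifying system `K`. -/
def Purifies {H K : Type*} [Fintype H] [Fintype K] (ρ : Matrix H H ℂ) (ψ : H × K → ℂ) : Prop :=
  (∑ i, Complex.normSq (ψ i)) = 1 ∧
  (Matrix.of fun h h' => ∑ k, ψ (h, k) * star (ψ (h', k))) = ρ

/-- The singlet vector `(|01⟩ − |10⟩)/√2` on `ℂ² ⊗ ℂ²`. -/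
def singletVec : Fin 2 × Fin 2 → ℂ := fun p =>
  if p = (0, 1) then ((1 / Real.sqrt 2 : ℝ) : ℂ)
  else if p = (1, 0) then (-(1 / Real.sqrt 2 : ℝ) : ℂ) else 0

/-- The two-qubit Werner state with singlet fraction `f`. -/
def werner (f : ℝ) : Matrix (Fin 2 × Fin 2) (Fin 2 × Fin 2) ℂ :=
  (f : ℂ) • pureMat singletVec + (((1 - f) / 3 : ℝ) : ℂ) • (1 - pureMat singletVec)

/-!
If `ψ` purifies `ρ` and `φ` purifies `σ`, then `ψ ⊗ φ`, with ancillas `A₁'A₂'` and `B₁'B₂'`,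
purifies `ρ ⊗ σ` across the cut `A₁A₂ : B₁B₂`, and its reduced state on `A₁A₂A₁'A₂'` is the
Kronecker product of the two reduced states with the factors reordered. The eigenvalues of a
Kronecker product are the products of eigenvalues, so entropy is additive on it, and taking
infima over `ψ` and `φ` gives the inequality. The ancilla dimensions multiply, so the product
purification has exactly the ancilla dimension `|A₁A₂||B₁B₂|` fixed in the definition of `EP`.
Both infima are over nonempty sets because `√ρ` yields a purification of any density matrix.
-/

theorem le_csInf_add_csInf {S T : Set ℝ} (hS : S.Nonempty) (hT : T.Nonempty) {a : ℝ}
    (h : ∀ s ∈ S, ∀ t ∈ T, a ≤ s + t) : a ≤ sInf S + sInf T := by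
  have hs : ∀ s ∈ S, a - s ≤ sInf T := fun s hsS =>
    le_csInf hT fun t htT => by linarith [h s hsS t htT]
  have : a - sInf T ≤ sInf S := le_csInf hS fun s hsS => by linarith [hs s hsS]
  linarith

section Shannon

variable {ι κ : Type*} [Fintype ι] [Fintype κ]

theorem shannon_nonneg {p : ι → ℝ} (hp : ∀ i, 0 ≤ p i) (hsum : ∑ i, p i = 1) :
    0 ≤ shannon p := by
  refine neg_nonneg.mpr (Finset.sum_nonpos fun i _ => mul_nonpos_of_nonneg_of_nonpos (hp i) ?_)
  exact Real.logb_nonpos one_lt_two (hp i)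
    (hsum ▸ Finset.single_le_sum (fun j _ => hp j) (Finset.mem_univ i))

theorem shannon_mul {p : ι → ℝ} {q : κ → ℝ} (hp : ∑ i, p i = 1) (hq : ∑ j, q j = 1) :
    shannon (fun k : ι × κ => p k.1 * q k.2) = shannon p + shannon q := by
  have hterm : ∀ i j, p i * q j * Real.logb 2 (p i * q j)
      = q j * (p i * Real.logb 2 (p i)) + p i * (q j * Real.logb 2 (q j)) := by
    intro i j
    rcases eq_or_ne (p i) 0 with hi | hi
    · simp [hi]
    rcases eq_or_ne (q j) 0 with hj | hj
    · simp [hj]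
    rw [Real.logb_mul hi hj]
    ring
  simp only [shannon, Fintype.sum_prod_type, hterm, Finset.sum_add_distrib, ← Finset.sum_mul,
    ← Finset.mul_sum, hp, hq, one_mul]
  ring

end Shannon

theorem Matrix.IsHermitian.kronecker {R n m : Type*} [CommMagma R] [StarMul R]
    {M₁ : Matrix n n R} {M₂ : Matrix m m R} (h₁ : M₁.IsHermitian) (h₂ : M₂.IsHermitian) :
    (M₁ ⊗ₖ M₂).IsHermitian := by
  rw [Matrix.IsHermitian, Matrix.conjTranspose_kronecker, h₁.eq, h₂.eq]

theorem Matrix.IsHermitian.sum_eigenvalues_eq_one {𝕜 n : Type*} [RCLike 𝕜] [Fintype n]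
    [DecidableEq n] {M : Matrix n n 𝕜} (hM : M.IsHermitian) (htr : M.trace = 1) :
    ∑ i, hM.eigenvalues i = 1 := by
  have := hM.trace_eq_sum_eigenvalues
  rw [htr, ← RCLike.ofReal_sum, ← RCLike.ofReal_one, RCLike.ofReal_inj] at this
  exact this.symm

section VonNeumann

open Polynomial

variable {n m : Type*} [Fintype n] [DecidableEq n] [Fintype m]

theorem Matrix.IsHermitian.charpoly_kronecker [DecidableEq m] {M₁ : Matrix n n ℂ}
    {M₂ : Matrix m m ℂ} (h₁ : M₁.IsHermitian) (h₂ : M₂.IsHermitian) :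
    (M₁ ⊗ₖ M₂).charpoly =
      ∏ k : n × m, (X - C ((h₁.eigenvalues k.1 * h₂.eigenvalues k.2 : ℝ) : ℂ)) := by
  set U := (h₁.eigenvectorUnitary : Matrix n n ℂ) ⊗ₖ (h₂.eigenvectorUnitary : Matrix m m ℂ)
  have hU : star U * U = 1 :=
    (Matrix.kronecker_mem_unitary h₁.eigenvectorUnitary.2 h₂.eigenvectorUnitary.2).1
  have hdiag : M₁ ⊗ₖ M₂ = U * Matrix.diagonal
      (fun k : n × m => ((h₁.eigenvalues k.1 * h₂.eigenvalues k.2 : ℝ) : ℂ)) * star U := by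
    conv_lhs => rw [h₁.spectral_theorem, h₂.spectral_theorem, Unitary.conjStarAlgAut_apply,
      Unitary.conjStarAlgAut_apply]
    rw [Matrix.mul_kronecker_mul, Matrix.mul_kronecker_mul, Matrix.diagonal_kronecker_diagonal]
    simp [U, Matrix.star_eq_conjTranspose, Matrix.conjTranspose_kronecker]
  rw [hdiag, Matrix.charpoly_mul_comm, ← Matrix.mul_assoc, hU, Matrix.one_mul,
    Matrix.charpoly_diagonal]

theorem vN_eq_shannon_of_charpoly_eq {M : Matrix n n ℂ} (hM : M.IsHermitian) (d : m → ℝ)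
    (h : M.charpoly = ∏ k, (X - C (d k : ℂ))) : vN M = shannon d := by
  have hroots : Finset.univ.val.map (fun i => (hM.eigenvalues i : ℂ)) =
      Finset.univ.val.map (fun k => (d k : ℂ)) := by
    have hprod : ∏ k, (X - C (d k : ℂ)) =
        ((Finset.univ.val.map fun k => (d k : ℂ)).map fun a => X - C a).prod := by
      rw [Multiset.map_map]; rfl
    rw [← roots_multiset_prod_X_sub_C (Finset.univ.val.map fun k => (d k : ℂ)), ← hprod, ← h,
      hM.roots_charpoly_eq_eigenvalues]
    rfl
  have heig : Finset.univ.val.map hM.eigenvalues = Finset.univ.val.map d := by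
    simpa [Multiset.map_map] using congrArg (Multiset.map Complex.re) hroots
  have := congrArg (fun s => -(s.map fun x => x * Real.logb 2 x).sum) heig
  rw [vN, dif_pos hM, shannon, Finset.sum_eq_multiset_sum, Finset.sum_eq_multiset_sum]
  simpa only [Multiset.map_map, Function.comp_def] using this

theorem vN_eq_shannon {M : Matrix n n ℂ} (hM : M.IsHermitian) : vN M = shannon hM.eigenvalues :=
  vN_eq_shannon_of_charpoly_eq hM _ hM.charpoly_eq

theorem vN_nonneg {M : Matrix n n ℂ} (hM : M.PosSemidef) (htr : M.trace = 1) : 0 ≤ vN M := by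
  rw [vN_eq_shannon hM.1]
  exact shannon_nonneg hM.eigenvalues_nonneg (hM.1.sum_eigenvalues_eq_one htr)

theorem vN_submatrix_equiv [DecidableEq m] {M : Matrix n n ℂ} (hM : M.IsHermitian) (e : m ≃ n) :
    vN (M.submatrix e e) = vN M := by
  rw [vN_eq_shannon hM]
  exact vN_eq_shannon_of_charpoly_eq (hM.submatrix e) _
    ((Matrix.charpoly_reindex e.symm M).trans hM.charpoly_eq)

theorem vN_kronecker [DecidableEq m] {M₁ : Matrix n n ℂ} {M₂ : Matrix m m ℂ}
    (h₁ : M₁.IsHermitian) (h₂ : M₂.IsHermitian) (t₁ : M₁.trace = 1) (t₂ : M₂.trace = 1) :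
    vN (M₁ ⊗ₖ M₂) = vN M₁ + vN M₂ := by
  rw [vN_eq_shannon_of_charpoly_eq (h₁.kronecker h₂) _ (h₁.charpoly_kronecker h₂),
    shannon_mul (h₁.sum_eigenvalues_eq_one t₁) (h₂.sum_eigenvalues_eq_one t₂),
    vN_eq_shannon h₁, vN_eq_shannon h₂]

end VonNeumann

section Purification

variable {A B A' B' A'' B'' : Type*}

theorem redAAp_eq_mul_conjTranspose [Fintype B] [Fintype B'] (ψ : (A × A') × (B × B') → ℂ) :
    redAAp ψ = Matrix.of (fun p (k : B × B') => ψ (p, k)) *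
      (Matrix.of fun p (k : B × B') => ψ (p, k))ᴴ := by
  ext p q
  simp [redAAp, Matrix.mul_apply, Fintype.sum_prod_type]

theorem posSemidef_redAAp [Fintype A] [Fintype B] [Fintype A'] [Fintype B']
    [DecidableEq A] [DecidableEq A'] (ψ : (A × A') × (B × B') → ℂ) :
    (redAAp ψ).PosSemidef := by
  rw [redAAp_eq_mul_conjTranspose]
  exact Matrix.posSemidef_self_mul_conjTranspose _

theorem trace_redAAp [Fintype A] [Fintype B] [Fintype A'] [Fintype B']
    (ψ : (A × A') × (B × B') → ℂ) :
    (redAAp ψ).trace = ((∑ i, Complex.normSq (ψ i) : ℝ) : ℂ) := by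
  simp [Matrix.trace, redAAp, Complex.mul_conj, Fintype.sum_prod_type]

theorem trace_redAAp_eq_one [Fintype A] [Fintype B] [Fintype A'] [Fintype B']
    {ψ : (A × A') × (B × B') → ℂ} (hψ : ∑ i, Complex.normSq (ψ i) = 1) :
    (redAAp ψ).trace = 1 := by
  rw [trace_redAAp, hψ, Complex.ofReal_one]

theorem trace_redAB [Fintype A] [Fintype B] [Fintype A'] [Fintype B']
    (ψ : (A × A') × (B × B') → ℂ) :
    (redAB ψ).trace = ((∑ i, Complex.normSq (ψ i) : ℝ) : ℂ) := by
  simp only [Matrix.trace, redAB, Matrix.diag_apply, Matrix.of_apply, Fintype.sum_prod_type]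
  push_cast
  refine Finset.sum_congr rfl fun a _ => Finset.sum_comm.trans ?_
  simp [Complex.mul_conj]

theorem isPurification_iff_redAB_eq [Fintype A] [Fintype B] [Fintype A'] [Fintype B']
    (ρ : Matrix (A × B) (A × B) ℂ) (ψ : (A × A') × (B × B') → ℂ) :
    IsPurification ρ ψ ↔ redAB ψ = ρ ∧ ρ.trace = 1 := by
  rw [IsPurification, and_comm, and_congr_right_iff]
  rintro rfl
  rw [trace_redAB, ← Complex.ofReal_one, Complex.ofReal_inj]

open scoped MatrixOrder in
theorem exists_isPurification_prod_ancillas [Fintype A] [Fintype B] [DecidableEq A]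
    [DecidableEq B] {ρ : Matrix (A × B) (A × B) ℂ} (hρ : IsDensity ρ) :
    ∃ ψ : (A × (A × B)) × (B × (A × B)) → ℂ, IsPurification ρ ψ := by
  set S := CFC.sqrt ρ
  have hS : Sᴴ = S := (CFC.sqrt_nonneg ρ).posSemidef.1
  have hSS : S * Sᴴ = ρ := by rw [hS, CFC.sqrt_mul_sqrt_self ρ hρ.1.nonneg]
  -- `ψ = ∑ₖ (√ρ)|k⟩ ⊗ |k⟩_{A'} ⊗ |k⟩_{B'}`
  refine ⟨fun i => if i.1.2 = i.2.2 then S (i.1.1, i.2.1) i.1.2 else 0,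
    (isPurification_iff_redAB_eq _ _).2 ⟨?_, hρ.2⟩⟩
  ext p q
  simp [redAB, ← hSS, Matrix.mul_apply]

def relabelAncillas (eA : A' ≃ A'') (eB : B' ≃ B'') (ψ : (A × A') × (B × B') → ℂ) :
    (A × A'') × (B × B'') → ℂ :=
  fun i => ψ ((i.1.1, eA.symm i.1.2), (i.2.1, eB.symm i.2.2))

theorem redAB_relabelAncillas [Fintype A'] [Fintype B'] [Fintype A''] [Fintype B'']
    (eA : A' ≃ A'') (eB : B' ≃ B'') (ψ : (A × A') × (B × B') → ℂ) :
    redAB (relabelAncillas eA eB ψ) = redAB ψ := by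
  ext p q
  simp only [redAB, relabelAncillas, Matrix.of_apply]
  exact Fintype.sum_equiv eA.symm _ _ fun x => Fintype.sum_equiv eB.symm _ _ fun y => rfl

theorem IsPurification.relabelAncillas [Fintype A] [Fintype B] [Fintype A'] [Fintype B']
    [Fintype A''] [Fintype B''] {ρ : Matrix (A × B) (A × B) ℂ} {ψ : (A × A') × (B × B') → ℂ}
    (hψ : IsPurification ρ ψ) (eA : A' ≃ A'') (eB : B' ≃ B'') :
    IsPurification ρ (relabelAncillas eA eB ψ) := by
  rw [isPurification_iff_redAB_eq, redAB_relabelAncillas]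
  exact (isPurification_iff_redAB_eq ρ ψ).1 hψ

theorem redAAp_relabelAncillas [Fintype B] [Fintype B'] [Fintype B'']
    (eA : A' ≃ A'') (eB : B' ≃ B'') (ψ : (A × A') × (B × B') → ℂ) :
    redAAp (relabelAncillas eA eB ψ) =
      (redAAp ψ).submatrix (Equiv.prodCongr (Equiv.refl A) eA.symm)
        (Equiv.prodCongr (Equiv.refl A) eA.symm) := by
  ext p q
  simp only [redAAp, relabelAncillas, Matrix.of_apply, Matrix.submatrix_apply]
  exact Finset.sum_congr rfl fun b _ => Fintype.sum_equiv eB.symm _ _ fun y => rfl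

theorem vN_redAAp_relabelAncillas [Fintype A] [Fintype B] [Fintype A'] [Fintype B']
    [Fintype A''] [Fintype B''] [DecidableEq A] [DecidableEq A'] [DecidableEq A'']
    (eA : A' ≃ A'') (eB : B' ≃ B'') (ψ : (A × A') × (B × B') → ℂ) :
    vN (redAAp (relabelAncillas eA eB ψ)) = vN (redAAp ψ) := by
  rw [redAAp_relabelAncillas]
  exact vN_submatrix_equiv (posSemidef_redAAp ψ).1 _

end Purification

section EntanglementOfPurification

variable {A B : Type*} [Fintype A] [Fintype B] [DecidableEq A] [DecidableEq B]
  {ρ : Matrix (A × B) (A × B) ℂ}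

theorem exists_isPurification (hρ : IsDensity ρ) :
    ∃ ψ : (A × Fin (Fintype.card A * Fintype.card B)) ×
      (B × Fin (Fintype.card A * Fintype.card B)) → ℂ, IsPurification ρ ψ := by
  obtain ⟨ψ, hψ⟩ := exists_isPurification_prod_ancillas hρ
  have e := Fintype.equivFinOfCardEq (Fintype.card_prod A B)
  exact ⟨_, hψ.relabelAncillas e e⟩

theorem EP_le_vN_redAAp {A' B' : Type*} [Fintype A'] [Fintype B'] [DecidableEq A']
    (hA' : Fintype.card A' = Fintype.card A * Fintype.card B)
    (hB' : Fintype.card B' = Fintype.card A * Fintype.card B)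
    {ψ : (A × A') × (B × B') → ℂ} (hψ : IsPurification ρ ψ) : EP ρ ≤ vN (redAAp ψ) := by
  rw [← vN_redAAp_relabelAncillas (Fintype.equivFinOfCardEq hA') (Fintype.equivFinOfCardEq hB')]
  refine csInf_le ⟨0, ?_⟩ ⟨_, hψ.relabelAncillas _ _, rfl⟩
  rintro _ ⟨χ, hχ, rfl⟩
  exact vN_nonneg (posSemidef_redAAp χ) (trace_redAAp_eq_one hχ.1)

end EntanglementOfPurification

section TensorProduct

variable {A₁ B₁ A₂ B₂ A₁' B₁' A₂' B₂' : Type*}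

def bipartiteKronecker (ρ : Matrix (A₁ × B₁) (A₁ × B₁) ℂ) (σ : Matrix (A₂ × B₂) (A₂ × B₂) ℂ) :
    Matrix ((A₁ × A₂) × (B₁ × B₂)) ((A₁ × A₂) × (B₁ × B₂)) ℂ :=
  Matrix.of fun p q => ρ (p.1.1, p.2.1) (q.1.1, q.2.1) * σ (p.1.2, p.2.2) (q.1.2, q.2.2)

def pureTensor (ψ : (A₁ × A₁') × (B₁ × B₁') → ℂ) (φ : (A₂ × A₂') × (B₂ × B₂') → ℂ) :
    ((A₁ × A₂) × (A₁' × A₂')) × ((B₁ × B₂) × (B₁' × B₂')) → ℂ :=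
  fun i => ψ ((i.1.1.1, i.1.2.1), (i.2.1.1, i.2.2.1)) * φ ((i.1.1.2, i.1.2.2), (i.2.1.2, i.2.2.2))

theorem trace_bipartiteKronecker [Fintype A₁] [Fintype B₁] [Fintype A₂] [Fintype B₂]
    (ρ : Matrix (A₁ × B₁) (A₁ × B₁) ℂ) (σ : Matrix (A₂ × B₂) (A₂ × B₂) ℂ) :
    (bipartiteKronecker ρ σ).trace = ρ.trace * σ.trace := by
  simp only [bipartiteKronecker, Matrix.trace, Matrix.diag_apply, Matrix.of_apply,
    Fintype.sum_prod_type, Finset.sum_mul_sum]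

theorem redAB_pureTensor [Fintype A₁'] [Fintype B₁'] [Fintype A₂'] [Fintype B₂']
    (ψ : (A₁ × A₁') × (B₁ × B₁') → ℂ) (φ : (A₂ × A₂') × (B₂ × B₂') → ℂ) :
    redAB (pureTensor ψ φ) = bipartiteKronecker (redAB ψ) (redAB φ) := by
  ext p q
  simp only [redAB, pureTensor, bipartiteKronecker, Matrix.of_apply, Fintype.sum_prod_type,
    Finset.sum_mul_sum, star_mul', mul_mul_mul_comm (ψ _) (φ _)]

theorem redAAp_pureTensor [Fintype B₁] [Fintype B₂] [Fintype B₁'] [Fintype B₂']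
    (ψ : (A₁ × A₁') × (B₁ × B₁') → ℂ) (φ : (A₂ × A₂') × (B₂ × B₂') → ℂ) :
    redAAp (pureTensor ψ φ) = (redAAp ψ ⊗ₖ redAAp φ).submatrix
      (Equiv.prodProdProdComm A₁ A₂ A₁' A₂') (Equiv.prodProdProdComm A₁ A₂ A₁' A₂') := by
  ext p q
  simp only [redAAp, pureTensor, Matrix.of_apply, Matrix.submatrix_apply,
    Matrix.kroneckerMap_apply, Equiv.prodProdProdComm_apply, Fintype.sum_prod_type,
    Finset.sum_mul_sum, star_mul', mul_mul_mul_comm (ψ _) (φ _)]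

theorem IsPurification.pureTensor [Fintype A₁] [Fintype B₁] [Fintype A₂] [Fintype B₂]
    [Fintype A₁'] [Fintype B₁'] [Fintype A₂'] [Fintype B₂']
    {ρ : Matrix (A₁ × B₁) (A₁ × B₁) ℂ} {σ : Matrix (A₂ × B₂) (A₂ × B₂) ℂ}
    {ψ : (A₁ × A₁') × (B₁ × B₁') → ℂ} {φ : (A₂ × A₂') × (B₂ × B₂') → ℂ}
    (hψ : IsPurification ρ ψ) (hφ : IsPurification σ φ) :
    IsPurification (bipartiteKronecker ρ σ) (pureTensor ψ φ) := by
  rw [isPurification_iff_redAB_eq] at hψ hφ ⊢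
  rw [redAB_pureTensor, hψ.1, hφ.1, trace_bipartiteKronecker, hψ.2, hφ.2, one_mul]
  exact ⟨rfl, rfl⟩

theorem vN_redAAp_pureTensor [Fintype A₁] [Fintype B₁] [Fintype A₂] [Fintype B₂]
    [Fintype A₁'] [Fintype B₁'] [Fintype A₂'] [Fintype B₂']
    [DecidableEq A₁] [DecidableEq A₂] [DecidableEq A₁'] [DecidableEq A₂']
    {ψ : (A₁ × A₁') × (B₁ × B₁') → ℂ} {φ : (A₂ × A₂') × (B₂ × B₂') → ℂ}
    (hψ : ∑ i, Complex.normSq (ψ i) = 1) (hφ : ∑ i, Complex.normSq (φ i) = 1) :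
    vN (redAAp (pureTensor ψ φ)) = vN (redAAp ψ) + vN (redAAp φ) := by
  have h₁ := (posSemidef_redAAp ψ).1
  have h₂ := (posSemidef_redAAp φ).1
  rw [redAAp_pureTensor, vN_submatrix_equiv (h₁.kronecker h₂)]
  exact vN_kronecker h₁ h₂ (trace_redAAp_eq_one hψ) (trace_redAAp_eq_one hφ)

end TensorProduct

/-- subadditivity of `E_P` under tensor products,
across the cut `A₁A₂ : B₁B₂`. -/
theorem EP_subadditive {A₁ B₁ A₂ B₂ : Type*}
    [Fintype A₁] [Fintype B₁] [Fintype A₂] [Fintype B₂]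
    [DecidableEq A₁] [DecidableEq B₁] [DecidableEq A₂] [DecidableEq B₂]
    (ρ : Matrix (A₁ × B₁) (A₁ × B₁) ℂ) (σ : Matrix (A₂ × B₂) (A₂ × B₂) ℂ)
    (hρ : IsDensity ρ) (hσ : IsDensity σ) :
    EP (Matrix.of fun p q : (A₁ × A₂) × (B₁ × B₂) =>
        ρ (p.1.1, p.2.1) (q.1.1, q.2.1) * σ (p.1.2, p.2.2) (q.1.2, q.2.2))
      ≤ EP ρ + EP σ := by
  obtain ⟨ψ₀, hψ₀⟩ := exists_isPurification hρ
  obtain ⟨φ₀, hφ₀⟩ := exists_isPurification hσ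
  refine le_csInf_add_csInf ?_ ?_ ?_
  · exact ⟨_, ψ₀, hψ₀, rfl⟩
  · exact ⟨_, φ₀, hφ₀, rfl⟩
  rintro _ ⟨ψ, hψ, rfl⟩ _ ⟨φ, hφ, rfl⟩
  have hcard : Fintype.card (Fin (Fintype.card A₁ * Fintype.card B₁) ×
      Fin (Fintype.card A₂ * Fintype.card B₂)) =
      Fintype.card (A₁ × A₂) * Fintype.card (B₁ × B₂) := by
    simp only [Fintype.card_prod, Fintype.card_fin]
    ring
  rw [← vN_redAAp_pureTensor hψ.1 hφ.1]
  exact EP_le_vN_redAAp hcard hcard (hψ.pureTensor hφ)
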